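/- Let k ≥ 1, let σ be a permutation (an Equiv) of Fin k → ZMod 2, and let g : (Fin k → ZMod 2) → ZMod 4 be arbitrary. Define f : (Fin k → ZMod 2) × (Fin k → ZMod 2) → ZMod 4 by f(x, y) = 2 * ((∑ j, (σ x) j * y j).val : ZMod 4) + g(x) (inner sum in ZMod 2). Then for every u, v : Fin k → ZMod 2, f̂(u, v) = 2^k * Complex.I ^ (g (σ⁻¹ v)).val * (-1) ^ (∑ j, u j * (σ⁻¹ v) j).val. In particular Complex.normSq (f̂(u,v)) = 4^k for all (u,v), so f is a Z_4-valued bent function in 2k variables (a quaternary Maiorana–McFarland bent function). -/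

import Mathlib

/-- The Fourier transform of a `ZMod 4`-valued function of `2k` binary variables. -/
noncomputable def fourier4'' {k : ℕ}
    (f : (Fin k → ZMod 2) × (Fin k → ZMod 2) → ZMod 4)
    (u v : Fin k → ZMod 2) : ℂ :=
  ∑ p : (Fin k → ZMod 2) × (Fin k → ZMod 2),
    Complex.I ^ (f p).val * (-1 : ℂ) ^ ((∑ j, u j * p.1 j) + (∑ j, v j * p.2 j)).val

/-!
Summing over `y` first, the inner sum `∑_y (-1)^((σ x + v)·y)` is a character sum that vanishes
unless `σ x = v`, so only `x = σ⁻¹ v` survives and contributes `2^k`. The `ZMod 4` term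
`2 (σ x·y)` becomes the sign `(-1)^(σ x·y)` because `i² = -1`, which is what makes the inner sum
a character sum in `y`.
-/

open Finset

namespace AddChar

lemma map_sum_eq_prod {A M ι : Type*} [AddCommMonoid A] [CommMonoid M] (ψ : AddChar A M)
    (s : Finset ι) (a : ι → A) : ψ (∑ i ∈ s, a i) = ∏ i ∈ s, ψ (a i) := by
  classical
  induction s using Finset.induction_on with
  | empty => simp
  | insert i s hi ih => rw [sum_insert hi, prod_insert hi, map_add_eq_mul, ih]

variable {R R' : Type*} [CommRing R] [Fintype R] [DecidableEq R] [CommRing R'] [IsDomain R']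

theorem sum_apply_dotProduct_eq_ite {ι : Type*} [Fintype ι] [DecidableEq ι] {ψ : AddChar R R'}
    (hψ : ψ.IsPrimitive) (w : ι → R) :
    ∑ y : ι → R, ψ (w ⬝ᵥ y) = if w = 0 then (Fintype.card R : R') ^ Fintype.card ι else 0 := by
  calc ∑ y : ι → R, ψ (w ⬝ᵥ y) = ∏ j, ∑ t, ψ (t * w j) := by
        simp only [dotProduct, map_sum_eq_prod, Fintype.prod_sum, mul_comm]
    _ = ∏ j, if w j = 0 then (Fintype.card R : R') else 0 := by
        simp only [sum_mulShift _ hψ, apply_ite Nat.cast, Nat.cast_zero]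
    _ = _ := by
        simp only [Fintype.prod_ite_zero, prod_const, card_univ, funext_iff, Pi.zero_apply]

theorem sum_sum_mul_apply_perm_add_dotProduct {ι : Type*} [Fintype ι] [DecidableEq ι]
    {ψ : AddChar R R'} (hψ : ψ.IsPrimitive) (σ : Equiv.Perm (ι → R)) (H : (ι → R) → R')
    (v : ι → R) :
    ∑ x, ∑ y, H x * ψ ((σ x + v) ⬝ᵥ y) =
      (Fintype.card R : R') ^ Fintype.card ι * H (σ.symm (-v)) := by
  simp_rw [← mul_sum, sum_apply_dotProduct_eq_ite hψ, add_eq_zero_iff_eq_neg,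
    ← Equiv.eq_symm_apply, mul_ite, mul_zero, sum_ite_eq', mem_univ, if_true, mul_comm]

end AddChar

lemma Complex.I_pow_val_two_mul_val_add (s : ZMod 2) (c : ZMod 4) :
    Complex.I ^ (2 * (s.val : ZMod 4) + c).val = (-1 : ℂ) ^ s.val * Complex.I ^ c.val := by
  have hcast : 2 * (s.val : ZMod 4) + c = ((2 * s.val : ℕ) : ZMod 4) + c := by push_cast; rfl
  rw [hcast, ← AddChar.zmodChar_apply Complex.I_pow_four, AddChar.map_add_eq_mul,
    AddChar.zmodChar_apply', pow_mul, Complex.I_sq, AddChar.zmodChar_apply]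

theorem stmt12_general (k : ℕ) (σ : Equiv.Perm (Fin k → ZMod 2))
    (g : (Fin k → ZMod 2) → ZMod 4)
    (f : (Fin k → ZMod 2) × (Fin k → ZMod 2) → ZMod 4)
    (hf : ∀ p : (Fin k → ZMod 2) × (Fin k → ZMod 2),
      f p = 2 * ((∑ j, (σ p.1) j * p.2 j).val : ZMod 4) + g p.1) :
    ∀ u v : Fin k → ZMod 2,
      fourier4'' f u v =
        2 ^ k * Complex.I ^ (g (σ⁻¹ v)).val * (-1 : ℂ) ^ (∑ j, u j * (σ⁻¹ v) j).val ∧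
      Complex.normSq (fourier4'' f u v) = 4 ^ k := by
  intro u v
  have hχ : (AddChar.zmodChar 2 (neg_one_sq : (-1 : ℂ) ^ 2 = 1)).IsPrimitive :=
    AddChar.zmodChar_primitive_of_primitive_root 2 (IsPrimitiveRoot.neg_one 0 two_ne_zero.symm)
  have summand : ∀ x y, Complex.I ^ (f (x, y)).val *
      (-1 : ℂ) ^ ((∑ j, u j * x j) + ∑ j, v j * y j).val =
        Complex.I ^ (g x).val * (-1 : ℂ) ^ (u ⬝ᵥ x).val * (-1 : ℂ) ^ ((σ x + v) ⬝ᵥ y).val := by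
    intro x y
    rw [hf, Complex.I_pow_val_two_mul_val_add, add_dotProduct]
    simp only [← AddChar.zmodChar_apply neg_one_sq, AddChar.map_add_eq_mul, dotProduct]
    ring
  have spectrum : fourier4'' f u v =
      2 ^ k * Complex.I ^ (g (σ⁻¹ v)).val * (-1 : ℂ) ^ (∑ j, u j * (σ⁻¹ v) j).val := by
    rw [fourier4'', Fintype.sum_prod_type,
      sum_congr rfl fun x _ => sum_congr rfl fun y _ => summand x y]
    have := AddChar.sum_sum_mul_apply_perm_add_dotProduct hχ σ
      (fun x => Complex.I ^ (g x).val * (-1 : ℂ) ^ (u ⬝ᵥ x).val) v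
    simp only [AddChar.zmodChar_apply] at this
    rw [this, show -v = v from funext fun j => ZMod.neg_eq_self_mod_two (v j)]
    simp [mul_assoc, dotProduct, Equiv.Perm.inv_def]
  refine ⟨spectrum, ?_⟩
  norm_num [spectrum, Complex.normSq_I]

/-- Quaternary Maiorana–McFarland construction: for a permutation `σ` of `Fin k → ZMod 2`
and an arbitrary `g`, the function `f(x,y) = 2(σ(x)·y) + g(x)` has flat Fourier spectrum
`f̂(u,v) = 2^k · i^{g(σ⁻¹(v))} · (-1)^{u·σ⁻¹(v)}`, hence is bent in `2k` variables. -/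
theorem stmt12 (k : ℕ) (hk : 1 ≤ k) (σ : Equiv.Perm (Fin k → ZMod 2))
    (g : (Fin k → ZMod 2) → ZMod 4)
    (f : (Fin k → ZMod 2) × (Fin k → ZMod 2) → ZMod 4)
    (hf : ∀ p : (Fin k → ZMod 2) × (Fin k → ZMod 2),
      f p = 2 * ((∑ j, (σ p.1) j * p.2 j).val : ZMod 4) + g p.1) :
    ∀ u v : Fin k → ZMod 2,
      fourier4'' f u v =
        2 ^ k * Complex.I ^ (g (σ⁻¹ v)).val * (-1 : ℂ) ^ (∑ j, u j * (σ⁻¹ v) j).val ∧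
      Complex.normSq (fourier4'' f u v) = 4 ^ k :=
  stmt12_general k σ g f hf
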